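/- Let $(X,d,\mu,\mathcal{E}_p,\mathcal{F}_p,\Gamma_p)$ be a regular local $p$-Dirichlet space, $\Omega \subseteq X$ open, $u \in \mathcal{H}_+(\Omega)$ a quasicontinuous superharmonic function with $\Gamma_p\langle u\rangle(\Omega) < \infty$ and $0 \le u \le 1$, and let $h \in \mathcal{F}_p$ be quasicontinuous with $h \le 0$ on $X \setminus \Omega$. If $A \subseteq \Omega$ is a Borel set with $h \ge 1$ on $A$, then $\Gamma_p\langle u\rangle(A) \le \Gamma_p\langle h\rangle(\Omega)$. -/

import Mathlib

open MeasureTheory Metric Set ENNReal Filter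

noncomputable section

/-- A regular local `p`-Dirichlet structure on a metric measure space (Definition 2.1 of the
paper).  Members of `F` are (representatives of) functions in the domain of the energy; `Γ f`
is the energy measure of `f`, and the total energy is `E_p(f) = Γ f univ`. -/
structure PDirichlet (X : Type) [MetricSpace X] [MeasurableSpace X] [BorelSpace X]
    (μ : Measure X) (p : ℝ) where
  F : Set (X → ℝ)
  Γ : (X → ℝ) → Measure X
  mem_Lp : ∀ f ∈ F, MemLp f (ENNReal.ofReal p) μ
  congr_ae : ∀ f ∈ F, ∀ g : X → ℝ, f =ᵐ[μ] g → Measurable g → g ∈ F ∧ Γ g = Γ f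
  energy_finite : ∀ f ∈ F, Γ f Set.univ ≠ ∞
  add_mem : ∀ f ∈ F, ∀ g ∈ F, f + g ∈ F
  smul_mem : ∀ (c : ℝ), ∀ f ∈ F, c • f ∈ F
  homogeneity : ∀ f ∈ F, ∀ c : ℝ, Γ (c • f) = ENNReal.ofReal (|c| ^ p) • Γ f
  triangle : ∀ f ∈ F, ∀ g ∈ F, ∀ A : Set X,
    (Γ (f + g) A) ^ (1 / p) ≤ (Γ f A) ^ (1 / p) + (Γ g A) ^ (1 / p)
  lipschitz_mem : ∀ f ∈ F, ∀ (L : NNReal) (g : ℝ → ℝ), LipschitzWith L g → g 0 = 0 →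
    g ∘ f ∈ F
  lipschitz_contract : ∀ f ∈ F, ∀ (L : NNReal) (g : ℝ → ℝ), LipschitzWith L g → g 0 = 0 →
    ∀ A : Set X, Γ (g ∘ f) A ≤ (L : ℝ≥0∞) ^ p * Γ f A
  locality : ∀ f ∈ F, ∀ A : Set X, IsOpen A → ∀ c : ℝ,
    (∀ᵐ x ∂(μ.restrict A), f x = c) → Γ f A = 0
  lsc : ∀ (f : X → ℝ) (fs : ℕ → X → ℝ), (∀ i, fs i ∈ F) → Measurable f →
    Tendsto (fun i => eLpNorm (fs i - f) (ENNReal.ofReal p) μ) atTop (nhds 0) →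
    (∃ M : ℝ≥0∞, M ≠ ∞ ∧ ∀ i, Γ (fs i) Set.univ ≤ M) →
    f ∈ F ∧ ∀ A : Set X, Γ f A ≤ liminf (fun i => Γ (fs i) A) atTop
  complete : ∀ fs : ℕ → X → ℝ, (∀ i, fs i ∈ F) →
    (∀ ε : ℝ≥0∞, 0 < ε → ∃ K, ∀ m ≥ K, ∀ n ≥ K,
      (eLpNorm (fs m - fs n) (ENNReal.ofReal p) μ) ^ p + Γ (fs m - fs n) Set.univ < ε) →
    ∃ f ∈ F, Tendsto (fun i =>
      (eLpNorm (fs i - f) (ENNReal.ofReal p) μ) ^ p + Γ (fs i - f) Set.univ) atTop (nhds 0)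
  regular_dense_F : ∀ f ∈ F, ∀ ε : ℝ, 0 < ε → ∃ g ∈ F, Continuous g ∧ HasCompactSupport g ∧
    (eLpNorm (f - g) (ENNReal.ofReal p) μ) ^ p + Γ (f - g) Set.univ < ENNReal.ofReal ε
  regular_dense_C : ∀ f : X → ℝ, Continuous f → HasCompactSupport f → ∀ ε : ℝ, 0 < ε →
    ∃ g ∈ F, Continuous g ∧ HasCompactSupport g ∧ ∀ x, |f x - g x| ≤ ε

namespace PDirichlet

variable {X : Type} [MetricSpace X] [MeasurableSpace X] [BorelSpace X]
  {μ : Measure X} {p : ℝ}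

/-- The `p`-th power of the `F_p`-norm, valued in `ℝ≥0∞`. -/
def fnormP (D : PDirichlet X μ p) (f : X → ℝ) : ℝ≥0∞ :=
  (∫⁻ x, ENNReal.ofReal (|f x| ^ p) ∂μ) + D.Γ f Set.univ

/-- Capacity of an open set. -/
def capOpen (D : PDirichlet X μ p) (O : Set X) : ℝ≥0∞ :=
  ⨅ (f : X → ℝ) (_ : f ∈ D.F) (_ : ∀ᵐ x ∂μ, x ∈ O → 1 ≤ f x), D.fnormP f

/-- Capacity of an arbitrary set, by outer regularity. -/
def cap (D : PDirichlet X μ p) (A : Set X) : ℝ≥0∞ :=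
  ⨅ (O : Set X) (_ : IsOpen O) (_ : A ⊆ O), D.capOpen O

/-- A function is quasicontinuous if it is continuous off open sets of arbitrarily small
capacity. -/
def QuasiCont (D : PDirichlet X μ p) (f : X → ℝ) : Prop :=
  ∀ ε : ℝ, 0 < ε → ∃ O : Set X, IsOpen O ∧ D.cap O < ENNReal.ofReal ε ∧ ContinuousOn f Oᶜ

end PDirichlet

/-- The `μ`-average of `f` over `A`. -/
def avgSet {X : Type} [MeasurableSpace X] (μ : Measure X) (A : Set X) (f : X → ℝ) : ℝ :=
  (μ A).toReal⁻¹ * ∫ y in A, f y ∂μ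

/-- A regular scale function (with constants `C_Ψ`, `β₊ ≥ β₋ > 0`). -/
def IsRegularScale {X : Type} [MetricSpace X] (Ψ : X → ℝ → ℝ) (C_Ψ βp βm : ℝ) : Prop :=
  (∀ x, Ψ x 0 = 0) ∧ (∀ x r, 0 < r → 0 < Ψ x r) ∧
  ∀ (x y : X) (s r : ℝ), 0 < s → s ≤ r →
    ENNReal.ofReal r ≤ 2 * EMetric.diam (Set.univ : Set X) →
    C_Ψ⁻¹ * ((max s (dist x y)) / r) ^ βp * (s / max r (dist x y)) ^ βm ≤ Ψ x r / Ψ y s ∧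
    Ψ x r / Ψ y s ≤ C_Ψ * (r / max r (dist x y)) ^ βm * ((max r (dist x y)) / s) ^ βp

/-- The capacity upper bound `Cap_p(Ψ)`. -/
def CapUB {X : Type} [MetricSpace X] [MeasurableSpace X] [BorelSpace X]
    {μ : Measure X} {p : ℝ} (D : PDirichlet X μ p) (Ψ : X → ℝ → ℝ) (Ccap : ℝ) : Prop :=
  ∀ (x : X) (r : ℝ), 0 < r → ∃ ψ ∈ D.F, Continuous ψ ∧
    (∀ y ∈ ball x r, ψ y = 1) ∧ (∀ y ∉ ball x (2 * r), ψ y = 0) ∧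
    D.Γ ψ Set.univ ≤ ENNReal.ofReal Ccap * μ (ball x r) / ENNReal.ofReal (Ψ x r)

/-- The Poincaré inequality `PI_p(Ψ)` (in the equivalent non-averaged form
`∫_B |f - f_B|^p dμ ≤ C_PI Ψ(B) Γ⟨f⟩(ΛB)`). -/
def PoincareIneq {X : Type} [MetricSpace X] [MeasurableSpace X] [BorelSpace X]
    {μ : Measure X} {p : ℝ} (D : PDirichlet X μ p) (Ψ : X → ℝ → ℝ) (CPI Λ : ℝ) : Prop :=
  ∀ (x : X) (r : ℝ), 0 < r → ∀ f ∈ D.F,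
    ∫⁻ y in ball x r, ENNReal.ofReal (|f y - avgSet μ (ball x r) f| ^ p) ∂μ ≤
      ENNReal.ofReal (CPI * Ψ x r) * D.Γ f (ball x (Λ * r))

/-- The measure `μ` is doubling (with finite positive measure on balls). -/
def DoublingMeasure' {X : Type} [MetricSpace X] [MeasurableSpace X] (μ : Measure X)
    (C_D : ℝ) : Prop :=
  (∀ (x : X) (r : ℝ), 0 < r → μ (ball x (2 * r)) ≤ ENNReal.ofReal C_D * μ (ball x r)) ∧
  (∀ (x : X) (r : ℝ), 0 < r → 0 < μ (ball x r) ∧ μ (ball x r) < ∞)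

end

open MeasureTheory Metric Set ENNReal Filter PDirichlet

/-- `u` is superharmonic in the open set `Ω`:
`Γ⟨u + ψ⟩(Ω ∩ spt ψ) ≥ Γ⟨u⟩(Ω ∩ spt ψ)` for every nonnegative `ψ ∈ F` vanishing off `Ω`. -/
def Superharmonic {X : Type} [MetricSpace X] [MeasurableSpace X] [BorelSpace X]
    {μ : Measure X} {p : ℝ} (D : PDirichlet X μ p) (Ω : Set X) (u : X → ℝ) : Prop :=
  ∀ ψ ∈ D.F, (∀ x, 0 ≤ ψ x) → (∀ x ∉ Ω, ψ x = 0) →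
    D.Γ u (Ω ∩ tsupport ψ) ≤ D.Γ (u + ψ) (Ω ∩ tsupport ψ)

/-!
Fix `0 < c < 1`, let `k` be `h` clamped to `[0, 1]`, and test the superharmonicity of `u`
against `ψ = (k - c u)⁺`. Where `k ≤ c u` the function `ψ` carries no energy, and where
`k > c u` we have `c u + ψ = k + (c u - k)⁺` with the second term carrying no energy.
Comparing the two pieces (the first one has finite energy, so it can be cancelled) gives
`c^p Γ⟨u⟩(Ω ∩ {c u < k}) ≤ Γ⟨k⟩(Ω) ≤ Γ⟨h⟩(Ω)`, and `A ⊆ {c u < k}`; let `c → 1`.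

That `Γ⟨v⁺⟩` does not charge `{v ≤ 0}` for quasicontinuous `v` is not an axiom of the
structure. It follows from lower semicontinuity of the energy: `(v - e - 2T)⁺`, with `T` a
small capacity test function of the exceptional open set of `v`, vanishes on an open
neighbourhood of `{v < e}` and converges to `(v - e)⁺` in `L^p` as `T → 0`; then let `e → 0`.
Quasicontinuous functions are first replaced by Borel versions that differ from them only on
the μ-null intersection of the exceptional sets.
-/

open Topology

theorem eLpNorm_ofReal_eq {α : Type*} [MeasurableSpace α] {ν : Measure α} {p : ℝ} (hp : 0 < p)
    (f : α → ℝ) :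
    eLpNorm f (ENNReal.ofReal p) ν = (∫⁻ x, ENNReal.ofReal (|f x| ^ p) ∂ν) ^ (1 / p) := by
  rw [eLpNorm_eq_lintegral_rpow_enorm_toReal (by simpa using hp) ofReal_ne_top,
    toReal_ofReal hp.le]
  simp_rw [Real.enorm_eq_ofReal_abs, ofReal_rpow_of_nonneg (abs_nonneg _) hp.le]

theorem lintegral_ofReal_abs_rpow_ne_top {α : Type*} [MeasurableSpace α] {ν : Measure α} {p : ℝ}
    (hp : 0 < p) {f : α → ℝ} (hf : MemLp f (ENNReal.ofReal p) ν) :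
    ∫⁻ x, ENNReal.ofReal (|f x| ^ p) ∂ν ≠ ∞ := by
  have := hf.eLpNorm_lt_top
  rw [eLpNorm_ofReal_eq hp, rpow_lt_top_iff_of_pos (by positivity)] at this
  exact this.ne

theorem ofReal_abs_add_rpow_le {p : ℝ} (hp : 1 ≤ p) (a b : ℝ) :
    ENNReal.ofReal (|a + b| ^ p) ≤
      2 ^ (p - 1) * (ENNReal.ofReal (|a| ^ p) + ENNReal.ofReal (|b| ^ p)) := by
  have hp0 : 0 ≤ p := by linarith
  simp_rw [← ofReal_rpow_of_nonneg (abs_nonneg _) hp0]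
  calc ENNReal.ofReal |a + b| ^ p ≤ (ENNReal.ofReal |a| + ENNReal.ofReal |b|) ^ p := by
        rw [← ofReal_add (abs_nonneg _) (abs_nonneg _)]
        exact rpow_le_rpow (ofReal_le_ofReal (abs_add_le _ _)) hp0
    _ ≤ _ := rpow_add_le_mul_rpow_add_rpow _ _ hp

theorem tendsto_ofReal_one_div_add_atTop_nhds_zero_nat :
    Tendsto (fun n : ℕ => ENNReal.ofReal (1 / (n + 1))) atTop (𝓝 0) := by
  simpa using ENNReal.tendsto_ofReal tendsto_one_div_add_atTop_nhds_zero_nat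

theorem le_of_forall_ofReal_rpow_mul_le {x y : ℝ≥0∞} {p : ℝ} (hp : 0 < p)
    (h : ∀ c : ℝ, 0 < c → c < 1 → ENNReal.ofReal (c ^ p) * x ≤ y) : x ≤ y := by
  refine le_of_forall_lt_one_mul_le fun a ha => ?_
  rcases eq_or_ne a 0 with rfl | ha0
  · simp
  have ha' : a.toReal < 1 := toReal_lt_of_lt_ofReal (by simpa using ha)
  have := h (a.toReal ^ p⁻¹) (Real.rpow_pos_of_pos (toReal_pos ha0 ha.ne_top) _)
    (Real.rpow_lt_one toReal_nonneg ha' (inv_pos.2 hp))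
  rwa [Real.rpow_inv_rpow toReal_nonneg hp.ne', ofReal_toReal ha.ne_top] at this

theorem add_max_sub_zero_comm (a b : ℝ) : a + max (b - a) 0 = b + max (a - b) 0 := by
  rcases le_total a b with h | h
  · rw [max_eq_left (by linarith), max_eq_right (by linarith)]; ring
  · rw [max_eq_right (by linarith), max_eq_left (by linarith)]; ring

theorem lintegral_ofReal_abs_posPart_sub_two_mul_sub_rpow_le {α : Type*} [MeasurableSpace α]
    {ν : Measure α} {p : ℝ} (hp : 0 ≤ p) {y T : α → ℝ} (hy : ∀ x, 0 ≤ y x) :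
    ∫⁻ x, ENNReal.ofReal (|max (y x - 2 * T x) 0 - y x| ^ p) ∂ν ≤
      ENNReal.ofReal (2 ^ p) * ∫⁻ x, ENNReal.ofReal (|T x| ^ p) ∂ν := by
  rw [← lintegral_const_mul' _ _ ofReal_ne_top]
  refine lintegral_mono fun x => ?_
  rw [← ofReal_mul (by positivity), ← Real.mul_rpow (by norm_num) (abs_nonneg _)]
  refine ofReal_le_ofReal (Real.rpow_le_rpow (abs_nonneg _) ?_ hp)
  have h := abs_max_sub_max_le_abs (y x - 2 * T x) (y x) 0
  rwa [max_eq_left (hy x), show y x - 2 * T x - y x = -(2 * T x) by ring, abs_neg, abs_mul,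
    abs_two] at h

theorem measurable_piecewise_iUnion_of_continuousOn {α β ι : Type*} [TopologicalSpace α]
    [MeasurableSpace α] [OpensMeasurableSpace α] [TopologicalSpace β] [MeasurableSpace β]
    [BorelSpace β] [Countable ι] {F : ι → Set α} [∀ x, Decidable (x ∈ ⋃ i, F i)]
    (hF : ∀ i, IsClosed (F i)) {f g : α → β} (hf : ∀ i, ContinuousOn f (F i))
    (hg : Measurable g) : Measurable ((⋃ i, F i).piecewise f g) := by
  refine measurable_of_isOpen fun t ht => ?_
  rw [piecewise_preimage, Set.ite, inter_iUnion]
  refine .union (.iUnion fun i => ?_) ((hg ht.measurableSet).diff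
    (.iUnion fun i => (hF i).measurableSet))
  obtain ⟨u, hu, hfu⟩ := continuousOn_iff'.1 (hf i) t ht
  rw [hfu]
  exact hu.measurableSet.inter (hF i).measurableSet

namespace PDirichlet

variable {X : Type} [MetricSpace X] [MeasurableSpace X] [BorelSpace X] {μ : Measure X} {p : ℝ}
  (D : PDirichlet X μ p)

theorem sub_mem {f g : X → ℝ} (hf : f ∈ D.F) (hg : g ∈ D.F) : f - g ∈ D.F := by
  simpa [sub_eq_add_neg] using D.add_mem f hf _ (D.smul_mem (-1) g hg)

theorem gamma_congr_ae {f g : X → ℝ} (hf : f ∈ D.F) (hg : g ∈ D.F) (hfg : f =ᵐ[μ] g) :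
    D.Γ f = D.Γ g := by
  have hm := (D.mem_Lp f hf).aestronglyMeasurable.aemeasurable
  rw [← (D.congr_ae f hf _ hm.ae_eq_mk hm.measurable_mk).2,
    ← (D.congr_ae g hg _ (hfg.symm.trans hm.ae_eq_mk) hm.measurable_mk).2]

theorem comp_mem {f : X → ℝ} (hf : f ∈ D.F) {g : ℝ → ℝ} (hg : LipschitzWith 1 g)
    (hg0 : g 0 = 0) : g ∘ f ∈ D.F :=
  D.lipschitz_mem f hf 1 g hg hg0

theorem gamma_comp_le {f : X → ℝ} (hf : f ∈ D.F) {g : ℝ → ℝ} (hg : LipschitzWith 1 g)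
    (hg0 : g 0 = 0) : D.Γ (g ∘ f) ≤ D.Γ f := fun A => by
  simpa using D.lipschitz_contract f hf 1 g hg hg0 A

theorem gamma_smul {f : X → ℝ} (hf : f ∈ D.F) (c : ℝ) (A : Set X) :
    D.Γ (c • f) A = ENNReal.ofReal (|c| ^ p) * D.Γ f A := by
  rw [D.homogeneity f hf c, Measure.smul_apply, smul_eq_mul]

theorem gamma_add_le_of_null (hp : 0 < p) {f g : X → ℝ} (hf : f ∈ D.F) (hg : g ∈ D.F)
    {A : Set X} (hA : D.Γ g A = 0) : D.Γ (f + g) A ≤ D.Γ f A := by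
  have := rpow_le_rpow (D.triangle f hf g hg A) hp.le
  rwa [hA, zero_rpow_of_pos (by positivity), add_zero, one_div, rpow_inv_rpow hp.ne',
    rpow_inv_rpow hp.ne'] at this

theorem gamma_add_le (hp : 1 ≤ p) {f g : X → ℝ} (hf : f ∈ D.F) (hg : g ∈ D.F) (A : Set X) :
    D.Γ (f + g) A ≤ 2 ^ (p - 1) * (D.Γ f A + D.Γ g A) := by
  have hp0 : p ≠ 0 := by positivity
  calc D.Γ (f + g) A ≤ (D.Γ f A ^ (1 / p) + D.Γ g A ^ (1 / p)) ^ p := by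
        simpa [one_div, rpow_inv_rpow hp0] using
          rpow_le_rpow (D.triangle f hf g hg A) (by positivity : 0 ≤ p)
    _ ≤ 2 ^ (p - 1) * ((D.Γ f A ^ (1 / p)) ^ p + (D.Γ g A ^ (1 / p)) ^ p) :=
        rpow_add_le_mul_rpow_add_rpow _ _ hp
    _ = 2 ^ (p - 1) * (D.Γ f A + D.Γ g A) := by simp [one_div, rpow_inv_rpow hp0]

theorem gamma_sub_le (hp : 1 ≤ p) {f g : X → ℝ} (hf : f ∈ D.F) (hg : g ∈ D.F) (A : Set X) :
    D.Γ (f - g) A ≤ 2 ^ (p - 1) * (D.Γ f A + D.Γ g A) := by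
  have := D.gamma_add_le hp hf (D.smul_mem (-1) g hg) A
  rwa [D.gamma_smul hg, abs_neg, abs_one, Real.one_rpow, ofReal_one, one_mul, neg_one_smul,
    ← sub_eq_add_neg] at this

theorem fnormP_add_le (hp : 1 ≤ p) {f g : X → ℝ} (hf : f ∈ D.F) (hg : g ∈ D.F) :
    D.fnormP (f + g) ≤ 2 ^ (p - 1) * (D.fnormP f + D.fnormP g) := by
  have hfm := (D.mem_Lp f hf).aestronglyMeasurable.aemeasurable
  have hlint : ∫⁻ x, ENNReal.ofReal (|(f + g) x| ^ p) ∂μ ≤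
      2 ^ (p - 1) * ((∫⁻ x, ENNReal.ofReal (|f x| ^ p) ∂μ) +
        ∫⁻ x, ENNReal.ofReal (|g x| ^ p) ∂μ) := by
    rw [← lintegral_add_left' (by fun_prop), ← lintegral_const_mul' _ _ (by simp)]
    exact lintegral_mono fun x => ofReal_abs_add_rpow_le hp (f x) (g x)
  calc D.fnormP (f + g) ≤ 2 ^ (p - 1) * ((∫⁻ x, ENNReal.ofReal (|f x| ^ p) ∂μ) +
        ∫⁻ x, ENNReal.ofReal (|g x| ^ p) ∂μ) + 2 ^ (p - 1) * (D.Γ f univ + D.Γ g univ) :=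
        add_le_add hlint (D.gamma_add_le hp hf hg univ)
    _ = 2 ^ (p - 1) * (D.fnormP f + D.fnormP g) := by simp only [fnormP]; ring

theorem fnormP_posPart_le (hp : 0 ≤ p) {f : X → ℝ} (hf : f ∈ D.F) :
    D.fnormP (fun x => max (f x) 0) ≤ D.fnormP f := by
  refine add_le_add (lintegral_mono fun x => ofReal_le_ofReal ?_)
    (D.gamma_comp_le hf (LipschitzWith.id.max_const 0) (by simp) univ)
  refine Real.rpow_le_rpow (abs_nonneg _) ?_ hp
  rw [abs_of_nonneg (le_max_right _ _)]
  exact max_le (le_abs_self _) (abs_nonneg _)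

theorem measure_le_fnormP (hp : 0 ≤ p) {O : Set X} (hO : MeasurableSet O) {T : X → ℝ}
    (hTO : ∀ᵐ x ∂μ, x ∈ O → 1 ≤ T x) : μ O ≤ D.fnormP T :=
  calc μ O = ∫⁻ _ in O, 1 ∂μ := (setLIntegral_one O).symm
    _ ≤ ∫⁻ x in O, ENNReal.ofReal (|T x| ^ p) ∂μ := by
        refine lintegral_mono_ae ((ae_restrict_iff' hO).2 (hTO.mono fun x hx hxO => ?_))
        exact one_le_ofReal.2 (Real.one_le_rpow ((hx hxO).trans (le_abs_self _)) hp)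
    _ ≤ ∫⁻ x, ENNReal.ofReal (|T x| ^ p) ∂μ := setLIntegral_le_lintegral O _
    _ ≤ D.fnormP T := le_self_add

theorem measure_le_cap (hp : 0 ≤ p) (A : Set X) : μ A ≤ D.cap A :=
  le_iInf₂ fun _ hO => le_iInf fun hAO => le_iInf₂ fun _ _ => le_iInf fun hTO =>
    (measure_mono hAO).trans (D.measure_le_fnormP hp hO.measurableSet hTO)

theorem cap_le_fnormP {O : Set X} (hO : IsOpen O) {T : X → ℝ} (hT : T ∈ D.F)
    (hTO : ∀ᵐ x ∂μ, x ∈ O → 1 ≤ T x) : D.cap O ≤ D.fnormP T :=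
  iInf₂_le_of_le O hO <| iInf_le_of_le subset_rfl <| iInf₂_le_of_le T hT <| iInf_le _ hTO

theorem exists_fnormP_lt_of_cap_lt {A : Set X} {ε : ℝ≥0∞} (h : D.cap A < ε) :
    ∃ O, IsOpen O ∧ A ⊆ O ∧ ∃ T ∈ D.F, (∀ᵐ x ∂μ, x ∈ O → 1 ≤ T x) ∧ D.fnormP T < ε := by
  simp only [cap, capOpen, iInf_lt_iff] at h
  obtain ⟨O, hO, hAO, T, hT, hTO, hlt⟩ := h
  exact ⟨O, hO, hAO, T, hT, hTO, hlt⟩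

variable {D}

theorem QuasiCont.exists_test (hp : 0 ≤ p) {f : X → ℝ} (hf : D.QuasiCont f) {ε : ℝ}
    (hε : 0 < ε) : ∃ O, IsOpen O ∧ ContinuousOn f Oᶜ ∧ ∃ T ∈ D.F, (∀ x, 0 ≤ T x) ∧
      (∀ᵐ x ∂μ, x ∈ O → 1 ≤ T x) ∧ D.fnormP T < ENNReal.ofReal ε := by
  obtain ⟨O, -, hcap, hfO⟩ := hf ε hε
  obtain ⟨O', hO', hOO', T, hT, hTO', hlt⟩ := D.exists_fnormP_lt_of_cap_lt hcap
  refine ⟨O', hO', hfO.mono (compl_subset_compl.2 hOO'), fun x => max (T x) 0,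
    D.comp_mem hT (LipschitzWith.id.max_const 0) (by simp), fun x => le_max_right _ _,
    hTO'.mono fun x hx hxO => (hx hxO).trans (le_max_left _ _),
    (D.fnormP_posPart_le hp hT).trans_lt hlt⟩

theorem QuasiCont.comp {f : X → ℝ} (hf : D.QuasiCont f) {g : ℝ → ℝ} (hg : Continuous g) :
    D.QuasiCont (g ∘ f) := fun ε hε => by
  obtain ⟨O, hO, hcap, hfO⟩ := hf ε hε
  exact ⟨O, hO, hcap, hg.comp_continuousOn hfO⟩

theorem QuasiCont.comp₂ (hp : 1 ≤ p) {f g : X → ℝ} (hf : D.QuasiCont f) (hg : D.QuasiCont g)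
    {φ : ℝ → ℝ → ℝ} (hφ : Continuous (Function.uncurry φ)) :
    D.QuasiCont (fun x => φ (f x) (g x)) := fun ε hε => by
  set δ := ε / (2 * 2 ^ (p - 1))
  have hδ : 0 < δ := by positivity
  obtain ⟨O₁, hO₁, hfO₁, T₁, hT₁, hT₁0, hT₁O, hT₁δ⟩ := hf.exists_test (by linarith) hδ
  obtain ⟨O₂, hO₂, hgO₂, T₂, hT₂, hT₂0, hT₂O, hT₂δ⟩ := hg.exists_test (by linarith) hδ
  refine ⟨O₁ ∪ O₂, hO₁.union hO₂, ?_, hφ.comp_continuousOn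
    ((hfO₁.mono (compl_subset_compl.2 subset_union_left)).prodMk
      (hgO₂.mono (compl_subset_compl.2 subset_union_right)))⟩
  have hT : ∀ᵐ x ∂μ, x ∈ O₁ ∪ O₂ → 1 ≤ (T₁ + T₂) x := by
    filter_upwards [hT₁O, hT₂O] with x h₁ h₂ hx
    rcases hx with hx | hx
    · simpa using add_le_add (h₁ hx) (hT₂0 x)
    · simpa using add_le_add (hT₁0 x) (h₂ hx)
  calc D.cap (O₁ ∪ O₂) ≤ D.fnormP (T₁ + T₂) :=
        D.cap_le_fnormP (hO₁.union hO₂) (D.add_mem _ hT₁ _ hT₂) hT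
    _ ≤ 2 ^ (p - 1) * (D.fnormP T₁ + D.fnormP T₂) := D.fnormP_add_le hp hT₁ hT₂
    _ < 2 ^ (p - 1) * (ENNReal.ofReal δ + ENNReal.ofReal δ) :=
        ENNReal.mul_lt_mul_right (rpow_pos two_pos ofNat_ne_top).ne'
          (rpow_ne_top_of_nonneg (by linarith) ofNat_ne_top) (ENNReal.add_lt_add hT₁δ hT₂δ)
    _ = ENNReal.ofReal ε := by
        rw [← ofReal_add hδ.le hδ.le, ← ofReal_ofNat 2,
          ofReal_rpow_of_nonneg (by norm_num) (by linarith), ← ofReal_mul (by positivity)]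
        congr 1
        rw [← div_mul_cancel₀ ε (by positivity : (2 : ℝ) * 2 ^ (p - 1) ≠ 0)]
        ring

theorem QuasiCont.exists_measurable_ae_eq (hp : 0 < p) {f : X → ℝ} (hf : D.QuasiCont f)
    {g : X → ℝ} (hg : Measurable g) : ∃ f' : X → ℝ, Measurable f' ∧ f' =ᵐ[μ] f ∧
      D.QuasiCont f' ∧ ∀ x, f' x = f x ∨ f' x = g x := by
  classical
  choose O hO hcap hfO using fun n : ℕ => hf (1 / (n + 1)) Nat.one_div_pos_of_nat
  have hf'f : ∀ n, EqOn ((⋃ n, (O n)ᶜ).piecewise f g) f (O n)ᶜ := fun n x hx =>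
    piecewise_eq_of_mem _ _ _ (mem_iUnion_of_mem n hx)
  refine ⟨(⋃ n, (O n)ᶜ).piecewise f g, measurable_piecewise_iUnion_of_continuousOn
    (fun n => (hO n).isClosed_compl) hfO hg, ?_, fun ε hε => ?_, fun x => ?_⟩
  · have hnull : μ (⋂ n, O n) = 0 :=
      le_antisymm (ge_of_tendsto' tendsto_ofReal_one_div_add_atTop_nhds_zero_nat fun n =>
        (measure_mono (iInter_subset _ n)).trans ((D.measure_le_cap hp.le _).trans (hcap n).le))
        zero_le
    refine measure_mono_null (fun x hx => mem_iInter.2 fun n => ?_) hnull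
    by_contra hxn
    exact hx (hf'f n hxn)
  · obtain ⟨n, hn⟩ := exists_nat_one_div_lt hε
    exact ⟨O n, hO n, (hcap n).trans (ofReal_lt_ofReal_iff hε |>.2 hn), (hfO n).congr (hf'f n)⟩
  · by_cases hx : x ∈ ⋃ n, (O n)ᶜ
    · exact .inl (piecewise_eq_of_mem _ _ _ hx)
    · exact .inr (piecewise_eq_of_notMem _ _ _ hx)

variable (D)

theorem gamma_eq_zero_of_tendsto (hp : 0 < p) {f : X → ℝ} (hf : Measurable f)
    {fs : ℕ → X → ℝ} (hfs : ∀ n, fs n ∈ D.F)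
    (hlim : Tendsto (fun n => ∫⁻ x, ENNReal.ofReal (|fs n x - f x| ^ p) ∂μ) atTop (𝓝 0))
    {M : ℝ≥0∞} (hM : M ≠ ∞) (hfsM : ∀ n, D.Γ (fs n) univ ≤ M) {A : Set X}
    (hA : ∀ n, D.Γ (fs n) A = 0) : D.Γ f A = 0 := by
  have hLp : Tendsto (fun n => eLpNorm (fs n - f) (ENNReal.ofReal p) μ) atTop (𝓝 0) := by
    simp_rw [eLpNorm_ofReal_eq hp, Pi.sub_apply]
    simpa [Function.comp_def, zero_rpow_of_pos, hp] using
      ((ENNReal.continuous_rpow_const (y := 1 / p)).tendsto 0).comp hlim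
  simpa [hA] using (D.lsc f fs hfs hf hLp ⟨M, hM, hfsM⟩).2 A

theorem gamma_posPart_sub_two_mul_eq_zero {y T : X → ℝ}
    (hz : (fun x => max (y x - 2 * T x) 0) ∈ D.F) (hy1 : ∀ x, y x ≤ 1) (hT0 : ∀ x, 0 ≤ T x)
    {O U : Set X} (hO : IsOpen O) (hTO : ∀ᵐ x ∂μ, x ∈ O → 1 ≤ T x) (hU : IsOpen U)
    (hyU : ∀ x ∈ U, x ∉ O → y x ≤ 0) :
    D.Γ (fun x => max (y x - 2 * T x) 0) (O ∪ U) = 0 := by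
  refine D.locality _ hz _ (hO.union hU) 0 ((ae_restrict_iff' (hO.union hU).measurableSet).2
    (hTO.mono fun x hx hxOU => max_eq_right ?_))
  by_cases hxO : x ∈ O
  · linarith [hx hxO, hy1 x]
  · linarith [hyU x (hxOU.resolve_left hxO) hxO, hT0 x]

theorem gamma_posPart_sub_two_mul_le (hp : 1 ≤ p) {y T : X → ℝ} (hy : y ∈ D.F) (hT : T ∈ D.F) :
    D.Γ (fun x => max (y x - 2 * T x) 0) univ ≤
      2 ^ (p - 1) * (D.Γ y univ + ENNReal.ofReal (2 ^ p) * D.Γ T univ) := by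
  have h2T : (2 : ℝ) • T ∈ D.F := D.smul_mem 2 _ hT
  calc D.Γ (fun x => max (y x - 2 * T x) 0) univ ≤ D.Γ (y - (2 : ℝ) • T) univ :=
        D.gamma_comp_le (g := fun t => max t 0) (D.sub_mem hy h2T)
          (LipschitzWith.id.max_const 0) (by simp) univ
    _ ≤ _ := by simpa [D.gamma_smul hT] using D.gamma_sub_le hp hy h2T univ

theorem gamma_posPart_sub_setOf_lt (hp : 1 ≤ p) {v : X → ℝ} (hv : v ∈ D.F)
    (hvm : Measurable v) (hv1 : ∀ x, v x ≤ 1) (hvq : D.QuasiCont v) {e : ℝ} (he : 0 < e) :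
    D.Γ (fun x => max (v x - e) 0) {x | v x < e} = 0 := by
  have hp0 : 0 < p := by linarith
  set y : X → ℝ := fun x => max (v x - e) 0
  have hy : y ∈ D.F :=
    D.comp_mem (g := fun t => max (t - e) 0) hv
      ((IsometryEquiv.subRight e).isometry.lipschitz.max_const 0) (by simp [he.le])
  choose O hO hvO T hT hT0 hTO hTn using fun n : ℕ =>
    hvq.exists_test hp0.le (Nat.one_div_pos_of_nat (n := n))
  set z : ℕ → X → ℝ := fun n x => max (y x - 2 * T n x) 0
  have hz : ∀ n, z n ∈ D.F := fun n =>
    D.comp_mem (g := fun t => max t 0) (D.sub_mem hy (D.smul_mem 2 _ (hT n)))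
      (LipschitzWith.id.max_const 0) (by simp)
  refine D.gamma_eq_zero_of_tendsto hp0 (by fun_prop) hz ?_
    (M := 2 ^ (p - 1) * (D.Γ y univ + ENNReal.ofReal (2 ^ p))) ?_ (fun n => ?_) fun n => ?_
  · have hlim := ENNReal.Tendsto.const_mul tendsto_ofReal_one_div_add_atTop_nhds_zero_nat
      (.inr (ofReal_ne_top : ENNReal.ofReal (2 ^ p) ≠ ∞))
    rw [mul_zero] at hlim
    refine tendsto_of_tendsto_of_tendsto_of_le_of_le tendsto_const_nhds hlim (fun n => zero_le)
      fun n => (lintegral_ofReal_abs_posPart_sub_two_mul_sub_rpow_le hp0.le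
        fun x => le_max_right _ _).trans ?_
    gcongr
    exact le_self_add.trans (hTn n).le
  · exact mul_ne_top (rpow_ne_top_of_nonneg (by linarith) ofNat_ne_top)
      (add_ne_top.2 ⟨D.energy_finite y hy, ofReal_ne_top⟩)
  · have hTn1 : D.Γ (T n) univ ≤ 1 := le_add_self.trans ((hTn n).le.trans
      (ofReal_le_one.2 (div_le_one_of_le₀ (by simp) (by positivity))))
    refine (D.gamma_posPart_sub_two_mul_le hp hy (hT n)).trans ?_
    gcongr
    exact mul_le_of_le_one_right zero_le hTn1
  · obtain ⟨W, hW, hWO⟩ := continuousOn_iff'.1 (hvO n) _ isOpen_Iio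
    refine measure_mono_null (fun x hx => ?_) (D.gamma_posPart_sub_two_mul_eq_zero (hz n)
      (fun x => max_le (by linarith [hv1 x]) zero_le_one) (hT0 n) (hO n) (hTO n) hW
      fun x hxW hxO => ?_)
    · by_cases hxO : x ∈ O n
      · exact .inl hxO
      · exact .inr (hWO.subset ⟨hx, hxO⟩).1
    · have : v x < e := (hWO.symm.subset ⟨hxW, hxO⟩).1
      exact (max_eq_right (by linarith)).le

theorem gamma_posPart_setOf_nonpos (hp : 1 ≤ p) {v : X → ℝ} (hv : v ∈ D.F)
    (hvm : Measurable v) (hv1 : ∀ x, v x ≤ 1) (hvq : D.QuasiCont v) :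
    D.Γ (fun x => max (v x) 0) {x | v x ≤ 0} = 0 := by
  have hp0 : 0 < p := by linarith
  have hlip : ∀ e : ℝ, LipschitzWith 1 (fun t : ℝ => max (t - e) 0) := fun e =>
    (IsometryEquiv.subRight e).isometry.lipschitz.max_const 0
  set e : ℕ → ℝ := fun n => 1 / (n + 1)
  have he : ∀ n, 0 < e n := fun n => Nat.one_div_pos_of_nat
  refine D.gamma_eq_zero_of_tendsto hp0 (by fun_prop) (fs := fun n x => max (v x - e n) 0)
    (fun n => D.comp_mem (g := fun t => max (t - e n) 0) hv (hlip _) (by simp [(he n).le])) ?_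
    (D.energy_finite v hv)
    (fun n => D.gamma_comp_le (g := fun t => max (t - e n) 0) hv (hlip _) (by simp [(he n).le])
      univ)
    fun n => measure_mono_null (fun x hx => lt_of_le_of_lt hx (he n))
      (D.gamma_posPart_sub_setOf_lt hp hv hvm hv1 hvq (he n))
  have hdom : ∀ n x, |max (v x - e n) 0 - max (v x) 0| ≤ |v x| := fun n x => by
    have h1 : max (v x - e n) 0 ≤ |v x| :=
      max_le (by linarith [le_abs_self (v x), he n]) (abs_nonneg _)
    have h2 : max (v x) 0 ≤ |v x| := max_le (le_abs_self _) (abs_nonneg _)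
    rw [abs_sub_le_iff]
    constructor <;> linarith [le_max_right (v x - e n) 0, le_max_right (v x) 0]
  have hlim : ∀ x, Tendsto (fun n => ENNReal.ofReal (|max (v x - e n) 0 - max (v x) 0| ^ p))
      atTop (𝓝 0) := fun x => by
    have hcont : Continuous fun t : ℝ => ENNReal.ofReal (|max (v x - t) 0 - max (v x) 0| ^ p) :=
      ENNReal.continuous_ofReal.comp ((Real.continuous_rpow_const hp0.le).comp (by fun_prop))
    simpa [e, Function.comp_def, Real.zero_rpow hp0.ne'] using
      (hcont.tendsto 0).comp tendsto_one_div_add_atTop_nhds_zero_nat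
  simpa using tendsto_lintegral_of_dominated_convergence (f := fun _ => 0)
    (fun x => ENNReal.ofReal (|v x| ^ p)) (fun n => by fun_prop)
    (fun n => ae_of_all _ fun x =>
      ofReal_le_ofReal (Real.rpow_le_rpow (abs_nonneg _) (hdom n x) hp0.le))
    (lintegral_ofReal_abs_rpow_ne_top hp0 (D.mem_Lp v hv)) (ae_of_all _ hlim)

end PDirichlet

section Superharmonic

variable {X : Type} [MetricSpace X] [MeasurableSpace X] [BorelSpace X] {μ : Measure X} {p : ℝ}
  {D : PDirichlet X μ p} {Ω : Set X} {u : X → ℝ}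

theorem Superharmonic.congr_ae (hsup : Superharmonic D Ω u) (hu : u ∈ D.F) {u' : X → ℝ}
    (hu' : u' ∈ D.F) (huu' : u =ᵐ[μ] u') : Superharmonic D Ω u' := fun ψ hψ hψ0 hψΩ => by
  rw [← D.gamma_congr_ae hu hu' huu', ← D.gamma_congr_ae (D.add_mem _ hu _ hψ)
    (D.add_mem _ hu' _ hψ) (huu'.add (EventuallyEq.refl _ _))]
  exact hsup ψ hψ hψ0 hψΩ

theorem Superharmonic.ofReal_rpow_mul_gamma_le_smul_add (hsup : Superharmonic D Ω u)
    (hu : u ∈ D.F) {ψ : X → ℝ} (hψ : ψ ∈ D.F) (hψ0 : ∀ x, 0 ≤ ψ x) (hψΩ : ∀ x ∉ Ω, ψ x = 0) {c : ℝ}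
    (hc : 0 < c) :
    ENNReal.ofReal (c ^ p) * D.Γ u (Ω ∩ tsupport ψ) ≤ D.Γ (c • u + ψ) (Ω ∩ tsupport ψ) := by
  have hψc : c⁻¹ • ψ ∈ D.F := D.smul_mem _ _ hψ
  have h := hsup _ hψc (fun x => mul_nonneg (inv_nonneg.2 hc.le) (hψ0 x))
    (fun x hx => by simp [hψΩ x hx])
  rw [tsupport, Function.support_const_smul_of_ne_zero _ _ (inv_ne_zero hc.ne'), ← tsupport] at h
  calc ENNReal.ofReal (c ^ p) * D.Γ u (Ω ∩ tsupport ψ)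
      ≤ ENNReal.ofReal (c ^ p) * D.Γ (u + c⁻¹ • ψ) (Ω ∩ tsupport ψ) := by gcongr
    _ = D.Γ (c • (u + c⁻¹ • ψ)) (Ω ∩ tsupport ψ) := by
        rw [D.gamma_smul (D.add_mem _ hu _ hψc), abs_of_pos hc]
    _ = D.Γ (c • u + ψ) (Ω ∩ tsupport ψ) := by rw [smul_add, smul_inv_smul₀ hc.ne']

theorem Superharmonic.ofReal_rpow_mul_gamma_setOf_lt_le (hp : 0 < p)
    (hsup : Superharmonic D Ω u) (hu : u ∈ D.F) (hum : Measurable u) (hufin : D.Γ u Ω ≠ ∞)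
    (hu0 : ∀ x, 0 ≤ u x) {k : X → ℝ} (hk : k ∈ D.F) (hkm : Measurable k)
    (hkΩ : ∀ x ∉ Ω, k x ≤ 0) {c : ℝ} (hc : 0 < c)
    (hpos : D.Γ (fun x => max (k x - c * u x) 0) {x | k x - c * u x ≤ 0} = 0)
    (hneg : D.Γ (fun x => max (c * u x - k x) 0) {x | c * u x - k x ≤ 0} = 0) :
    ENNReal.ofReal (c ^ p) * D.Γ u (Ω ∩ {x | c * u x < k x}) ≤ D.Γ k Ω := by
  set ψ : X → ℝ := fun x => max (k x - c * u x) 0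
  set w : X → ℝ := fun x => max (c * u x - k x) 0
  have hcu : c • u ∈ D.F := D.smul_mem c _ hu
  have hψ : ψ ∈ D.F :=
    D.comp_mem (g := fun t => max t 0) (D.sub_mem hk hcu) (LipschitzWith.id.max_const 0) (by simp)
  have hw : w ∈ D.F :=
    D.comp_mem (g := fun t => max t 0) (D.sub_mem hcu hk) (LipschitzWith.id.max_const 0) (by simp)
  have hkw : c • u + ψ = k + w := funext fun x => add_max_sub_zero_comm (c * u x) (k x)
  set S := Ω ∩ tsupport ψ
  set B := {x | k x - c * u x ≤ 0}
  have hB : MeasurableSet B := measurableSet_le (by fun_prop) measurable_const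
  have hSB : D.Γ (c • u + ψ) (S ∩ B) ≤ ENNReal.ofReal (c ^ p) * D.Γ u (S ∩ B) := by
    calc D.Γ (c • u + ψ) (S ∩ B) ≤ D.Γ (c • u) (S ∩ B) :=
          D.gamma_add_le_of_null hp hcu hψ (measure_mono_null inter_subset_right hpos)
      _ = ENNReal.ofReal (c ^ p) * D.Γ u (S ∩ B) := by rw [D.gamma_smul hu, abs_of_pos hc]
  have hSB' : D.Γ (c • u + ψ) (S \ B) ≤ D.Γ k Ω := by
    rw [hkw]
    refine (D.gamma_add_le_of_null hp hk hw (measure_mono_null (fun x hx => ?_) hneg)).trans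
      (measure_mono (sdiff_subset.trans inter_subset_left))
    have hxB : ¬ k x - c * u x ≤ 0 := hx.2
    exact show c * u x - k x ≤ 0 by linarith [not_le.1 hxB]
  have hfin : ENNReal.ofReal (c ^ p) * D.Γ u (S ∩ B) ≠ ∞ := mul_ne_top ofReal_ne_top
    (ne_top_of_le_ne_top hufin (measure_mono (inter_subset_left.trans inter_subset_left)))
  have hsplit : ENNReal.ofReal (c ^ p) * D.Γ u (S ∩ B) + ENNReal.ofReal (c ^ p) * D.Γ u (S \ B) ≤
      ENNReal.ofReal (c ^ p) * D.Γ u (S ∩ B) + D.Γ k Ω :=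
    calc _ = ENNReal.ofReal (c ^ p) * D.Γ u S := by rw [← mul_add, measure_inter_add_sdiff S hB]
      _ ≤ D.Γ (c • u + ψ) S := hsup.ofReal_rpow_mul_gamma_le_smul_add hu hψ
          (fun x => le_max_right _ _)
          (fun x hx => max_eq_right (by linarith [hkΩ x hx, mul_nonneg hc.le (hu0 x)])) hc
      _ ≤ D.Γ (c • u + ψ) (S ∩ B) + D.Γ (c • u + ψ) (S \ B) := measure_le_inter_add_sdiff _ _ _
      _ ≤ _ := add_le_add hSB hSB'
  refine le_trans ?_ ((ENNReal.add_le_add_iff_left hfin).1 hsplit)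
  gcongr
  rintro x ⟨hxΩ, hx⟩
  have hx' : 0 < k x - c * u x := sub_pos.2 hx
  exact ⟨⟨hxΩ, subset_tsupport _ (lt_max_of_lt_left hx').ne'⟩, fun h => h.not_gt hx'⟩

theorem Superharmonic.gamma_le_of_one_le (hp : 1 ≤ p) (hsup : Superharmonic D Ω u)
    (hu : u ∈ D.F) (hum : Measurable u) (huq : D.QuasiCont u) (hufin : D.Γ u Ω ≠ ∞)
    (hu01 : ∀ x, 0 ≤ u x ∧ u x ≤ 1) {h : X → ℝ} (hh : h ∈ D.F) (hhm : Measurable h)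
    (hhq : D.QuasiCont h) (hhΩ : ∀ x ∉ Ω, h x ≤ 0) {A : Set X} (hAΩ : A ⊆ Ω)
    (hhA : ∀ x ∈ A, 1 ≤ h x) : D.Γ u A ≤ D.Γ h Ω := by
  have hp0 : 0 < p := by linarith
  have hlip : LipschitzWith 1 (fun t : ℝ => max (min t 1) 0) :=
    (LipschitzWith.id.min_const 1).max_const 0
  set k : X → ℝ := fun x => max (min (h x) 1) 0
  have hk : k ∈ D.F := D.comp_mem (g := fun t => max (min t 1) 0) hh hlip (by norm_num)
  have hkq : D.QuasiCont k := hhq.comp (g := fun t => max (min t 1) 0) (by fun_prop)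
  have hkm : Measurable k := by fun_prop
  have hk0 : ∀ x, 0 ≤ k x := fun x => le_max_right _ _
  have hk1 : ∀ x, k x ≤ 1 := fun x => max_le (min_le_right _ _) zero_le_one
  refine le_of_forall_ofReal_rpow_mul_le hp0 fun c hc0 hc1 => ?_
  have hpos := D.gamma_posPart_setOf_nonpos hp (v := fun x => k x - c * u x)
    (D.sub_mem hk (D.smul_mem c _ hu)) (by fun_prop)
    (fun x => by nlinarith [hk1 x, (hu01 x).1])
    (hkq.comp₂ hp huq (φ := fun a b => a - c * b) (by fun_prop))
  have hneg := D.gamma_posPart_setOf_nonpos hp (v := fun x => c * u x - k x)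
    (D.sub_mem (D.smul_mem c _ hu) hk) (by fun_prop)
    (fun x => by nlinarith [hk0 x, (hu01 x).2])
    (huq.comp₂ hp hkq (φ := fun a b => c * a - b) (by fun_prop))
  calc ENNReal.ofReal (c ^ p) * D.Γ u A
      ≤ ENNReal.ofReal (c ^ p) * D.Γ u (Ω ∩ {x | c * u x < k x}) := by
        gcongr
        intro x hx
        have hkx : k x = 1 := by simp [k, hhA x hx]
        exact ⟨hAΩ hx, show c * u x < k x by nlinarith [(hu01 x).2]⟩
    _ ≤ D.Γ k Ω := hsup.ofReal_rpow_mul_gamma_setOf_lt_le hp0 hu hum hufin (fun x => (hu01 x).1)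
        hk hkm (fun x hx => (max_eq_right ((min_le_left _ _).trans (hhΩ x hx))).le) hc0 hpos hneg
    _ ≤ D.Γ h Ω := D.gamma_comp_le (g := fun t => max (min t 1) 0) hh hlip (by norm_num) Ω

end Superharmonic

theorem stmt13_general {X : Type} [MetricSpace X] [MeasurableSpace X] [BorelSpace X]
    (μ : Measure X) (p : ℝ) (hp : 1 < p) (D : PDirichlet X μ p)
    (Ω : Set X)
    (u : X → ℝ) (hu : u ∈ D.F) (huq : D.QuasiCont u)
    (husup : Superharmonic D Ω u) (hufin : D.Γ u Ω ≠ ∞)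
    (hu01 : ∀ x, 0 ≤ u x ∧ u x ≤ 1)
    (h : X → ℝ) (hh : h ∈ D.F) (hhq : D.QuasiCont h) (hh0 : ∀ x ∉ Ω, h x ≤ 0)
    (A : Set X) (hA : MeasurableSet A) (hAΩ : A ⊆ Ω) (hhA : ∀ x ∈ A, 1 ≤ h x) :
    D.Γ u A ≤ D.Γ h Ω := by
  have hp0 : 0 < p := by linarith
  obtain ⟨u', hu'm, hu'u, hu'q, hu'val⟩ := huq.exists_measurable_ae_eq hp0 measurable_zero
  -- filling the exceptional set with `1` on `A` keeps `1 ≤ h'` there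
  obtain ⟨h', hh'm, hh'h, hh'q, hh'val⟩ :=
    hhq.exists_measurable_ae_eq hp0 (measurable_one.indicator hA)
  obtain ⟨hu', hΓu⟩ := D.congr_ae u hu u' hu'u.symm hu'm
  obtain ⟨hh', hΓh⟩ := D.congr_ae h hh h' hh'h.symm hh'm
  rw [← hΓu, ← hΓh]
  refine (husup.congr_ae hu hu' hu'u.symm).gamma_le_of_one_le hp.le hu' hu'm hu'q (hΓu ▸ hufin)
    (fun x => ?_) hh' hh'm hh'q (fun x hx => ?_) hAΩ fun x hx => ?_
  · rcases hu'val x with hx | hx <;> simp [hx, hu01 x]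
  · rcases hh'val x with hx' | hx' <;> simp [hx', hh0 x hx, indicator_of_notMem (mt (@hAΩ x) hx)]
  · rcases hh'val x with hx' | hx' <;> simp [hx', hhA x hx, hx]

/-- the log-Caccioppoli-type energy comparison (Lemma 3.1 of the paper). -/
theorem stmt13 {X : Type} [MetricSpace X] [MeasurableSpace X] [BorelSpace X]
    (μ : Measure X) (p : ℝ) (hp : 1 < p) (D : PDirichlet X μ p)
    (Ω : Set X) (hΩ : IsOpen Ω)
    (u : X → ℝ) (hu : u ∈ D.F) (huq : D.QuasiCont u)
    (husup : Superharmonic D Ω u) (hufin : D.Γ u Ω ≠ ∞)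
    (hu01 : ∀ x, 0 ≤ u x ∧ u x ≤ 1)
    (h : X → ℝ) (hh : h ∈ D.F) (hhq : D.QuasiCont h) (hh0 : ∀ x ∉ Ω, h x ≤ 0)
    (A : Set X) (hA : MeasurableSet A) (hAΩ : A ⊆ Ω) (hhA : ∀ x ∈ A, 1 ≤ h x) :
    D.Γ u A ≤ D.Γ h Ω :=
  stmt13_general μ p hp D Ω u hu huq husup hufin hu01 h hh hhq hh0 A hA hAΩ hhA
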